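/- Let β ∈ ℂ be the root of X³ − 2X² + X − 1 with |β| < 1 and Im(β) < 0, let M be the 3×3 matrix with rows (1,1,0), (0,1,1), (1,0,0), and let φ : ℝ³ → ℂ be the ℝ-linear map φ(w) = w₀ + (β²−β)·w₁ + (β−1)·w₂. Then: (i) φ(Mw) = β·φ(w) for all w ∈ ℝ³; (ii) the restriction of φ to the hyperplane P = {w ∈ ℝ³ : w₀+w₁+w₂ = 0} is an ℝ-linear bijection onto ℂ; (iii) if v₀ ∈ ℝ³ is the eigenvector of M with positive coordinates, ‖v₀‖₁ = 1, for the real eigenvalue ρ > 1 of M, then φ(π_{v₀}(w)) = φ(w) for all w ∈ ℝ³. -/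

import Mathlib

/-!
Since `φ ∘ M = β • φ` and `β` is not real, `φ` vanishes on every real eigenvector of `M`, in
particular on `v₀`, so `φ` is constant along the direction of the projection `π_{v₀}`.
On `P` we have `φ(z) = (β² - β - 1) z₁ + (β - 2) z₂`, which is a bijection `P ≃ ℂ` as soon as
the two coefficients are `ℝ`-linearly independent; the relevant determinant is
`-Im β · (‖β - 2‖² - 1)`, nonzero because `Im β ≠ 0` and `‖β‖ < 1`.
-/

/-- `piProj y z = z - (h(z)/h(y)) • y`, the projection of `ℝ³` onto
`P = {z | z₀+z₁+z₂ = 0}` along `y`. -/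
noncomputable def piProj (y z : Fin 3 → ℝ) : Fin 3 → ℝ :=
  z - ((∑ i, z i) / (∑ i, y i)) • y

/-- The linear map `φ(w) = w₀ + (β²−β)·w₁ + (β−1)·w₂ : ℝ³ → ℂ`. -/
noncomputable def phiMap (β : ℂ) (w : Fin 3 → ℝ) : ℂ :=
  (w 0 : ℂ) + (β ^ 2 - β) * (w 1 : ℂ) + (β - 1) * (w 2 : ℂ)

open ComplexConjugate

def cassaigneMatrix : Matrix (Fin 3) (Fin 3) ℝ := !![1, 1, 0; 0, 1, 1; 1, 0, 0]

theorem Complex.mul_ofReal_add_mul_ofReal_eq_iff {a b c : ℂ} (hab : (conj a * b).im ≠ 0)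
    {s t : ℝ} :
    a * s + b * t = c ↔ s = (conj c * b).im / (conj a * b).im ∧
      t = (conj a * c).im / (conj a * b).im := by
  simp only [Complex.mul_im, Complex.conj_re, Complex.conj_im, neg_mul, ← sub_eq_add_neg] at hab ⊢
  rw [Complex.ext_iff, eq_div_iff hab, eq_div_iff hab]
  simp only [Complex.add_re, Complex.add_im, Complex.mul_re, Complex.mul_im,
    Complex.ofReal_re, Complex.ofReal_im, mul_zero, sub_zero, zero_add]
  constructor
  · rintro ⟨hre, him⟩
    exact ⟨by linear_combination b.im * hre - b.re * him,
      by linear_combination a.re * him - a.im * hre⟩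
  · rintro ⟨hs, ht⟩
    exact ⟨mul_left_cancel₀ hab (by linear_combination a.re * hs + b.re * ht),
      mul_left_cancel₀ hab (by linear_combination a.im * hs + b.im * ht)⟩

theorem phiMap_smul (β : ℂ) (r : ℝ) (w : Fin 3 → ℝ) :
    phiMap β (r • w) = r * phiMap β w := by
  simp only [phiMap, Pi.smul_apply, smul_eq_mul]
  push_cast
  ring

theorem phiMap_piProj (β : ℂ) (y z : Fin 3 → ℝ) :
    phiMap β (piProj y z) = phiMap β z - ((∑ i, z i) / (∑ i, y i) : ℝ) * phiMap β y := by
  simp only [piProj, phiMap, Pi.sub_apply, Pi.smul_apply, smul_eq_mul]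
  push_cast
  ring

theorem phiMap_piProj_of_phiMap_eq_zero {β : ℂ} {y : Fin 3 → ℝ} (hy : phiMap β y = 0)
    (z : Fin 3 → ℝ) : phiMap β (piProj y z) = phiMap β z := by
  rw [phiMap_piProj, hy, mul_zero, sub_zero]

theorem phiMap_of_sum_eq_zero (β : ℂ) {z : Fin 3 → ℝ} (hz : ∑ i, z i = 0) :
    phiMap β z = (β ^ 2 - β - 1) * z 1 + (β - 2) * z 2 := by
  rw [Fin.sum_univ_three] at hz
  rw [phiMap, show z 0 = -z 1 - z 2 by linarith]
  push_cast
  ring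

theorem phiMap_mulVec {β : ℂ} (hβ : β ^ 3 - 2 * β ^ 2 + β - 1 = 0) (w : Fin 3 → ℝ) :
    phiMap β (cassaigneMatrix.mulVec w) = β * phiMap β w := by
  simp only [phiMap, Matrix.mulVec, dotProduct, cassaigneMatrix, Matrix.of_apply, Matrix.cons_val',
    Matrix.cons_val_fin_one, Matrix.cons_val_zero, Fin.sum_univ_three, one_mul, Matrix.cons_val_one,
    Matrix.cons_val, zero_mul, add_zero, Complex.ofReal_add, zero_add]
  linear_combination (-(w 1 : ℂ)) * hβ

theorem phiMap_eq_zero_of_mulVec_eq_smul {β : ℂ} (hβ : β ^ 3 - 2 * β ^ 2 + β - 1 = 0)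
    {ρ : ℝ} (hβρ : β ≠ ρ) {v : Fin 3 → ℝ}
    (hv : cassaigneMatrix.mulVec v = ρ • v) : phiMap β v = 0 := by
  have h := phiMap_mulVec hβ v
  rw [hv, phiMap_smul] at h
  exact (mul_eq_zero.mp (by linear_combination -h : (β - ρ) * phiMap β v = 0)).resolve_left
    (sub_ne_zero.mpr hβρ)

-- Since `β² - β - 1 = (β - 2)(β + 1) + 1`, this imaginary part is `-Im β · (‖β - 2‖² - 1)`.
theorem im_conj_sq_sub_self_sub_one_mul_sub_two_ne_zero {β : ℂ} (hβabs : ‖β‖ < 1) (hβim : β.im ≠ 0) :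
    (conj (β ^ 2 - β - 1) * (β - 2)).im ≠ 0 := by
  have hnorm : 1 < ‖β - 2‖ :=
    calc 1 < ‖(2 : ℂ)‖ - ‖β‖ := by norm_num; linarith
      _ ≤ ‖(2 : ℂ) - β‖ := norm_sub_norm_le _ _
      _ = ‖β - 2‖ := norm_sub_rev _ _
  have hdet : (conj (β ^ 2 - β - 1) * (β - 2)).im = -β.im * (‖β - 2‖ ^ 2 - 1) := by
    rw [Complex.sq_norm, Complex.normSq_apply]
    simp only [Complex.mul_im, Complex.mul_re, Complex.conj_re, Complex.conj_im, Complex.sub_re,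
      Complex.sub_im, pow_two, Complex.one_re, Complex.one_im, Complex.re_ofNat, Complex.im_ofNat]
    ring
  rw [hdet]
  have : 0 < ‖β - 2‖ ^ 2 - 1 := by nlinarith
  exact mul_ne_zero (neg_ne_zero.mpr hβim) this.ne'

theorem existsUnique_sum_eq_zero_phiMap_eq {β : ℂ} (hβabs : ‖β‖ < 1) (hβim : β.im ≠ 0)
    (c : ℂ) : ∃! z : Fin 3 → ℝ, (∑ i, z i) = 0 ∧ phiMap β z = c := by
  have hD := im_conj_sq_sub_self_sub_one_mul_sub_two_ne_zero hβabs hβim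
  obtain ⟨s, t, hst⟩ : ∃ s t : ℝ, (β ^ 2 - β - 1) * s + (β - 2) * t = c :=
    ⟨_, _, (Complex.mul_ofReal_add_mul_ofReal_eq_iff hD).mpr ⟨rfl, rfl⟩⟩
  have hsum : ∑ i, ![-s - t, s, t] i = 0 := by
    simp only [Fin.sum_univ_three, Matrix.cons_val_zero, Matrix.cons_val_one, Matrix.cons_val]
    ring
  refine ⟨![-s - t, s, t], ⟨hsum, ?_⟩, ?_⟩
  · simpa [phiMap_of_sum_eq_zero β hsum] using hst
  · rintro z ⟨hz, hzc⟩
    rw [phiMap_of_sum_eq_zero β hz] at hzc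
    obtain ⟨hs, ht⟩ := (Complex.mul_ofReal_add_mul_ofReal_eq_iff hD).mp hst
    obtain ⟨hz1, hz2⟩ := (Complex.mul_ofReal_add_mul_ofReal_eq_iff hD).mp hzc
    rw [← hs] at hz1
    rw [← ht] at hz2
    rw [Fin.sum_univ_three] at hz
    ext i
    fin_cases i
    · simp; linarith
    · simpa using hz1
    · simpa using hz2

/-- For `β` the root of `X³−2X²+X−1` with `|β| < 1` and `Im β < 0`, and `M` the matrix
with rows `(1,1,0)`, `(0,1,1)`, `(1,0,0)`: (i) `φ(Mw) = β·φ(w)`; (ii) `φ` restricted to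
the hyperplane `P` is a bijection onto `ℂ`; (iii) if `v₀` is the positive Perron
eigenvector of `M` with `‖v₀‖₁ = 1` for the real eigenvalue `ρ > 1`, then
`φ(π_{v₀}(w)) = φ(w)` for all `w`. -/
theorem cassaigne_complex_projection
    (β : ℂ) (hβroot : β ^ 3 - 2 * β ^ 2 + β - 1 = 0)
    (hβabs : ‖β‖ < 1) (hβim : β.im < 0)
    (M : Matrix (Fin 3) (Fin 3) ℝ) (hM : M = !![1, 1, 0; 0, 1, 1; 1, 0, 0]) :
    (∀ w : Fin 3 → ℝ, phiMap β (M.mulVec w) = β * phiMap β w) ∧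
    (∀ c : ℂ, ∃! z : Fin 3 → ℝ, (∑ i, z i) = 0 ∧ phiMap β z = c) ∧
    (∀ ρ : ℝ, 1 < ρ → ∀ v₀ : Fin 3 → ℝ, (∀ i, 0 < v₀ i) → (∑ i, v₀ i) = 1 →
      M.mulVec v₀ = ρ • v₀ → ∀ w : Fin 3 → ℝ, phiMap β (piProj v₀ w) = phiMap β w) := by
  subst hM
  refine ⟨phiMap_mulVec hβroot, existsUnique_sum_eq_zero_phiMap_eq hβabs hβim.ne, ?_⟩
  intro ρ _ v₀ _ _ hv
  have hβρ : β ≠ ρ := fun h => hβim.ne (by simp [h])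
  exact phiMap_piProj_of_phiMap_eq_zero (phiMap_eq_zero_of_mulVec_eq_smul hβroot hβρ hv)
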